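/- arXiv:2005.06947 — 2 statements merged into one kernel-verified Lean document; each statement's English description precedes it below -/
import Mathlib

section
/- For every integer q, if there exists an MDS code of length n and dimension 2 over an alphabet of size q, then the graph G_q contains a clique of size n; consequently χ(G_q) ≥ n(q,2), where n(q,2) is the maximal such length. -/
/-- A vector over [q] indexed by the q² messages of [q]² is balanced if each symbol of [q]
appears exactly q times. -/
def BalancedVec (q : ℕ) (u : (Fin 2 → Fin q) → Fin q) : Prop :=
  ∀ j : Fin q, (Finset.univ.filter fun m => u m = j).card = q

/-- The graph G_q: vertices are the balanced vectors in [q]^{q²} (coordinates indexed by the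
q² elements of [q]²), with u ~ v iff the pairs (u_i, v_i) exhaust all of [q]×[q]. -/
def Gq (q : ℕ) : SimpleGraph {u : (Fin 2 → Fin q) → Fin q // BalancedVec q u} where
  Adj u v := u ≠ v ∧ Function.Surjective (fun m : Fin 2 → Fin q => (u.val m, v.val m))
  symm := by
    constructor
    rintro u v ⟨hne, hs⟩
    refine ⟨hne.symm, fun p => ?_⟩
    obtain ⟨m, hm⟩ := hs (p.2, p.1)
    rw [Prod.ext_iff] at hm
    exact ⟨m, by rw [Prod.ext_iff]; exact ⟨hm.2, hm.1⟩⟩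
  loopless := by constructor; rintro u ⟨hne, _⟩; exact hne rfl

/-!
Each coordinate of an MDS code of length `n ≥ 2` is paired bijectively with any other coordinate,
so it takes every value equally often: it is a vertex of `G_q`, and two distinct coordinates are
adjacent. For `n < 2` the clique is cut out of the one given by the trivial code `m ↦ m` of
length 2.
-/

open Function

lemma card_filter_fst_eq_card {α β γ : Type*} [Fintype α] [Fintype γ] [DecidableEq β]
    (e : α ≃ β × γ) (b : β) :
    (Finset.univ.filter fun a => (e a).1 = b).card = Fintype.card γ := by
  rw [← Finset.card_univ]
  refine Finset.card_nbij' (fun a => (e a).2) (fun c => e.symm (b, c)) ?_ ?_ ?_ ?_ <;>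
    intro a ha
  all_goals simp_all [Equiv.symm_apply_eq, Prod.ext_iff]

lemma balancedVec_fst_of_bijective {q : ℕ} {f : (Fin 2 → Fin q) → Fin q × Fin q}
    (hf : Bijective f) : BalancedVec q fun m => (f m).1 := by
  classical
  intro j
  simpa using card_filter_fst_eq_card (Equiv.ofBijective f hf) j

lemma bijective_of_injective_pair {q : ℕ} {f : (Fin 2 → Fin q) → Fin q × Fin q}
    (hf : Injective f) : Bijective f :=
  (Fintype.bijective_iff_injective_and_card f).2 ⟨hf, by simp [sq]⟩

lemma gq_adj_iff {q : ℕ} (hq : 2 ≤ q) {u v : {u : (Fin 2 → Fin q) → Fin q // BalancedVec q u}} :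
    (Gq q).Adj u v ↔ Surjective fun m => (u.1 m, v.1 m) := by
  refine ⟨And.right, fun hs => ⟨?_, hs⟩⟩
  rintro rfl
  obtain ⟨m, hm⟩ := hs (⟨0, by omega⟩, ⟨1, by omega⟩)
  simp only [Prod.ext_iff] at hm
  exact absurd (hm.1.symm.trans hm.2) (by simp [Fin.ext_iff])

lemma exists_pairwise_adj_of_mds {q n : ℕ} (hq : 2 ≤ q) (hn : 2 ≤ n)
    (C : (Fin 2 → Fin q) → Fin n → Fin q)
    (hC : ∀ i j : Fin n, i ≠ j → Injective fun m : Fin 2 → Fin q => (C m i, C m j)) :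
    ∃ f : Fin n → {u : (Fin 2 → Fin q) → Fin q // BalancedVec q u},
      Pairwise ((Gq q).Adj on f) := by
  have hbij (i j : Fin n) (hij : i ≠ j) := bijective_of_injective_pair (hC i j hij)
  have hbal (i : Fin n) : BalancedVec q fun m => C m i := by
    obtain ⟨j, hji⟩ := Fintype.exists_ne_of_one_lt_card (by rw [Fintype.card_fin]; omega) i
    exact balancedVec_fst_of_bijective (hbij i j hji.symm)
  exact ⟨fun i => ⟨fun m => C m i, hbal i⟩, fun i j hij => (gq_adj_iff hq).2 (hbij i j hij).2⟩

lemma injective_pair_of_ne {q : ℕ} {i j : Fin 2} (hij : i ≠ j) :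
    Injective fun m : Fin 2 → Fin q => (m i, m j) := by
  intro m m' hm
  simp only [Prod.mk.injEq] at hm
  funext k
  fin_cases i <;> fin_cases j <;> fin_cases k <;> simp_all

lemma SimpleGraph.exists_isNClique_of_pairwise_adj {V : Type*} {G : SimpleGraph V} {n : ℕ}
    {f : Fin n → V} (hf : Pairwise (G.Adj on f)) : ∃ s : Finset V, G.IsNClique n s := by
  classical
  have hinj : Injective f := fun i j hfij => by_contra fun hij => (hf hij).ne hfij
  refine ⟨Finset.univ.map ⟨f, hinj⟩, ?_, by simp⟩
  simp only [Finset.coe_map, Finset.coe_univ, Set.image_univ]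
  rintro _ ⟨i, rfl⟩ _ ⟨j, rfl⟩ hne
  exact hf fun hij => hne (congrArg f hij)

/-- If there is an (n,2) MDS code over an alphabet of size q (here q ≥ 2), then
G_q contains a clique of size n; consequently χ(G_q) ≥ n. -/
theorem stmt9 (q n : ℕ) (hq : 2 ≤ q)
    (C : (Fin 2 → Fin q) → Fin n → Fin q)
    (hC : ∀ i j : Fin n, i ≠ j →
      Function.Injective (fun m : Fin 2 → Fin q => (C m i, C m j))) :
    (∃ s : Finset {u : (Fin 2 → Fin q) → Fin q // BalancedVec q u},
      (Gq q).IsNClique n s) ∧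
    (n : ℕ∞) ≤ (Gq q).chromaticNumber := by
  obtain ⟨f, hf⟩ : ∃ f : Fin n → {u : (Fin 2 → Fin q) → Fin q // BalancedVec q u},
      Pairwise ((Gq q).Adj on f) := by
    rcases le_or_gt 2 n with hn | hn
    · exact exists_pairwise_adj_of_mds hq hn C hC
    · obtain ⟨g, hg⟩ := exists_pairwise_adj_of_mds hq le_rfl (fun m => m)
        fun _ _ => injective_pair_of_ne
      exact ⟨g ∘ Fin.castLE hn.le, hg.comp_of_injective (Fin.castLE_injective _)⟩
  exact ⟨(Gq q).exists_isNClique_of_pairwise_adj hf,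
    SimpleGraph.le_chromaticNumber_of_pairwise_adj (by simp) f hf⟩
end

section
/- For every graph G=(V,E) with q(G)=q (i.e., admitting an erasure code over an alphabet of size q for the erasure patterns of G), there is a graph homomorphism from G to G_q, and consequently χ(G) ≤ χ(G_q). -/
/-!
At an edge {u, v} the map m ↦ (C_u(m), C_v(m)) is a bijection of [q]², so each of C_u, C_v
takes every value exactly q times, i.e. is a balanced vector, and the pairs (C_u(m), C_v(m))
exhaust [q]²; for q ≥ 2 this also forces C_u ≠ C_v. Hence v ↦ C_v is a homomorphism into G_q
once isolated vertices, whose codewords need not be balanced, are sent to a fixed balanced vector.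
-/

open Finset Function

theorem BalancedVec.fst_of_bijective {q : ℕ} {g : (Fin 2 → Fin q) → Fin q × Fin q}
    (hg : Bijective g) : BalancedVec q fun m => (g m).1 := by
  intro j
  rw [card_equiv (Equiv.ofBijective g hg) (t := {j} ×ˢ univ) fun m => by
    simp only [Equiv.ofBijective_apply, mem_filter, mem_univ, true_and, mem_product,
      mem_singleton, and_true]]
  simp

theorem balancedVec_apply_zero (q : ℕ) : BalancedVec q fun m => m 0 :=
  BalancedVec.fst_of_bijective (piFinTwoEquiv fun _ => Fin q).bijective

theorem ne_of_surjective_prodMk {ι α : Type*} [Nontrivial α] {a b : ι → α}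
    (h : Surjective fun i => (a i, b i)) : a ≠ b := by
  rintro rfl
  obtain ⟨x, y, hxy⟩ := exists_pair_ne α
  obtain ⟨i, hi⟩ := h (x, y)
  exact hxy ((Prod.ext_iff.mp hi).1.symm.trans (Prod.ext_iff.mp hi).2)

namespace Gq

open Classical in
noncomputable def ofVec (q : ℕ) (u : (Fin 2 → Fin q) → Fin q) :
    {u : (Fin 2 → Fin q) → Fin q // BalancedVec q u} :=
  if h : BalancedVec q u then ⟨u, h⟩ else ⟨_, balancedVec_apply_zero q⟩

theorem ofVec_val {q : ℕ} {u : (Fin 2 → Fin q) → Fin q} (h : BalancedVec q u) :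
    (ofVec q u).val = u := by
  simp [ofVec, h]

theorem adj_ofVec {q : ℕ} (hq : 2 ≤ q) {u v : (Fin 2 → Fin q) → Fin q}
    (huv : Bijective fun m => (u m, v m)) : (Gq q).Adj (ofVec q u) (ofVec q v) := by
  have : Nontrivial (Fin q) := Fin.nontrivial_iff_two_le.mpr hq
  have hu : (ofVec q u).val = u := ofVec_val (BalancedVec.fst_of_bijective huv)
  have hv : (ofVec q v).val = v :=
    ofVec_val (BalancedVec.fst_of_bijective ((Equiv.prodComm _ _).bijective.comp huv))
  refine ⟨fun h => ne_of_surjective_prodMk huv.2 ?_, ?_⟩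
  · rw [← hu, ← hv, h]
  · rw [hu, hv]
    exact huv.2

noncomputable def homOfCode {q : ℕ} (hq : 2 ≤ q) {V : Type*} {G : SimpleGraph V}
    (C : (Fin 2 → Fin q) → V → Fin q)
    (hC : ∀ u v : V, G.Adj u v → Bijective fun m : Fin 2 → Fin q => (C m u, C m v)) :
    G →g Gq q where
  toFun v := ofVec q fun m => C m v
  map_rel' h := adj_ofVec hq (hC _ _ h)

end Gq

theorem stmt11_general (q : ℕ) (hq : 2 ≤ q) {V : Type} (G : SimpleGraph V)
    (C : (Fin 2 → Fin q) → V → Fin q)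
    (hC : ∀ u v : V, G.Adj u v →
      Function.Bijective (fun m : Fin 2 → Fin q => (C m u, C m v))) :
    Nonempty (G →g Gq q) ∧ G.chromaticNumber ≤ (Gq q).chromaticNumber :=
  let f := Gq.homOfCode hq C hC
  ⟨⟨f⟩, SimpleGraph.chromaticNumber_mono_of_hom f⟩

/-- If a graph G admits an erasure code over an alphabet of size q (q ≥ 2),
i.e. an encoding whose pair of coordinate functions at every edge is a bijection of [q]²,
then there is a graph homomorphism G → G_q, and consequently χ(G) ≤ χ(G_q). -/
theorem stmt11 (q : ℕ) (hq : 2 ≤ q) {V : Type} [Fintype V] (G : SimpleGraph V)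
    (C : (Fin 2 → Fin q) → V → Fin q)
    (hC : ∀ u v : V, G.Adj u v →
      Function.Bijective (fun m : Fin 2 → Fin q => (C m u, C m v))) :
    Nonempty (G →g Gq q) ∧ G.chromaticNumber ≤ (Gq q).chromaticNumber :=
  stmt11_general q hq G C hC
end
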